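/- arXiv:1603.08044 — 3 statements merged into one kernel-verified Lean document; each statement's English description precedes it below -/
import Mathlib

section
/- Suppose block 1 consists of a single index r₁, i.e. #{r : b r = 1} = 1 with b r₁ = 1. For an index u with b u = 2, let E_u ∈ N^{12} denote the matrix with entry 1 in position (r₁, u) and 0 elsewhere. Let f : N → N be an F-linear map such that f(A) = 0 for every A ∈ N^{ij} with (i,j) ≠ (1,2), f(N^{12}) ⊆ N^{2t} (i.e. for A ∈ N^{12}, f(A) r s = 0 unless b r = 2 and b s = t), and f(E_u) v s = f(E_v) u s for all indices u, v with b u = b v = 2 and all s with b s = t. Then f is a derivation of N. -/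
/-- `A` is a strictly block upper triangular matrix relative to the block function `b`
(index `r` lies in block `b r`): `A r s = 0` whenever `b r ≥ b s`. -/
def InN {F : Type*} [Field F] {n : ℕ} (b : Fin n → ℕ)
    (A : Matrix (Fin n) (Fin n) F) : Prop :=
  ∀ r s, b s ≤ b r → A r s = 0

/-- `A` lies in the `(i,j)` block `N^{ij}`: `A r s = 0` unless `b r = i` and `b s = j`. -/
def InBlk {F : Type*} [Field F] {n : ℕ} (b : Fin n → ℕ) (i j : ℕ)
    (A : Matrix (Fin n) (Fin n) F) : Prop :=
  ∀ r s, ¬(b r = i ∧ b s = j) → A r s = 0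

/-- `f` is a derivation of the Lie algebra `N` of strictly block upper triangular matrices:
it maps `N` into `N` and satisfies `f [X,Y] = [f X, Y] + [X, f Y]` on `N`,
where `[X,Y] = XY - YX`. -/
def IsDerN {F : Type*} [Field F] {n : ℕ} (b : Fin n → ℕ)
    (f : Matrix (Fin n) (Fin n) F →ₗ[F] Matrix (Fin n) (Fin n) F) : Prop :=
  (∀ A, InN b A → InN b (f A)) ∧
  ∀ X Y, InN b X → InN b Y →
    f (X * Y - Y * X) = (f X * Y - Y * f X) + (X * f Y - f Y * X)


/-!
Every `X ∈ N` enters the derivation identity only through its `(1,2)` block, which,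
block `1` being the single row `r₁`, is `∑ᵤ X r₁ u • E_u`. Since `f` kills the other blocks
and brackets of `N` have zero `(1,2)` block, `f [X,Y] = 0`; since `f X ∈ N^{2t}` and nothing
in `N` lies below block `t`, `f X * Y = 0`. The identity thus reduces to `X f(Y) = Y f(X)`,
which by bilinearity reduces to `E_u f(E_v) = E_v f(E_u)`: the symmetry hypothesis on rows.
-/

theorem Matrix.single_mul_eq_single_mul {l m o R : Type*} [DecidableEq l] [DecidableEq m]
    [Fintype m] [Semiring R] (i : l) {u v : m} (c : R) {M M' : Matrix m o R}
    (h : ∀ s, M u s = M' v s) : Matrix.single i u c * M = Matrix.single i v c * M' := by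
  ext r s
  by_cases hr : r = i
  · subst hr
    simp [h]
  · simp [Matrix.single_mul_apply_of_ne _ _ _ _ _ hr]

theorem sum_smul_mul_map_sum_smul_comm {R A ι : Type*} [CommSemiring R] [Semiring A]
    [Algebra R A] (s : Finset ι) (E : ι → A) (f : A →ₗ[R] A)
    (hE : ∀ u ∈ s, ∀ v ∈ s, E u * f (E v) = E v * f (E u)) (x y : ι → R) :
    (∑ u ∈ s, x u • E u) * f (∑ v ∈ s, y v • E v)
      = (∑ v ∈ s, y v • E v) * f (∑ u ∈ s, x u • E u) := by
  simp only [map_sum, map_smul, Finset.sum_mul, Finset.mul_sum, smul_mul_smul_comm]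
  rw [Finset.sum_comm]
  refine Finset.sum_congr rfl fun v hv => Finset.sum_congr rfl fun u hu => ?_
  rw [hE u hu v hv, mul_comm]

section BlockMatrices

variable {F : Type*} [Field F] {n : ℕ} {b : Fin n → ℕ}

variable (b) in
def blockProj (i j : ℕ) (A : Matrix (Fin n) (Fin n) F) : Matrix (Fin n) (Fin n) F :=
  Matrix.of fun r s => if b r = i ∧ b s = j then A r s else 0

theorem inBlk_blockProj (i j : ℕ) (A : Matrix (Fin n) (Fin n) F) :
    InBlk b i j (blockProj b i j A) := fun r s h => by
  simp only [blockProj, Matrix.of_apply, if_neg h]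

theorem inBlk_single (r u : Fin n) (c : F) : InBlk b (b r) (b u) (Matrix.single r u c) :=
  fun _ _ h =>
    Matrix.single_apply_of_ne _ _ _ _ _ fun ⟨hr, hu⟩ => h ⟨hr ▸ rfl, hu ▸ rfl⟩

theorem sum_blockProj (S : Finset ℕ) (hS : ∀ r, b r ∈ S) (A : Matrix (Fin n) (Fin n) F) :
    ∑ p ∈ S ×ˢ S, blockProj b p.1 p.2 A = A := by
  ext r s
  rw [Matrix.sum_apply,
    Finset.sum_eq_single_of_mem (b r, b s) (Finset.mk_mem_product (hS r) (hS s))]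
  · simp [blockProj]
  · rintro ⟨i, j⟩ - hne
    simp only [blockProj, Matrix.of_apply]
    rw [if_neg]
    rintro ⟨rfl, rfl⟩
    exact hne rfl

theorem InN.blockProj_eq_zero {A : Matrix (Fin n) (Fin n) F} (hA : InN b A) {i j : ℕ}
    (hji : j ≤ i) : blockProj b i j A = 0 := by
  ext r s
  simp only [blockProj, Matrix.of_apply, Matrix.zero_apply]
  split_ifs with h
  · exact hA r s (h.2 ▸ h.1 ▸ hji)
  · rfl

theorem InBlk.inN {M : Matrix (Fin n) (Fin n) F} {i j : ℕ} (hM : InBlk b i j M) (hij : i < j) :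
    InN b M := fun r s hsr => hM r s fun h => by omega

theorem InN.mul_apply_eq_zero {X Y : Matrix (Fin n) (Fin n) F} (hX : InN b X) (hY : InN b Y)
    {r s : Fin n} (hrs : b s ≤ b r + 1) : (X * Y) r s = 0 := by
  rw [Matrix.mul_apply]
  refine Finset.sum_eq_zero fun q _ => ?_
  rcases le_or_gt (b s) (b q) with h | h
  · rw [hY q s h, mul_zero]
  · rw [hX r q (by omega), zero_mul]

theorem InN.mul {X Y : Matrix (Fin n) (Fin n) F} (hX : InN b X) (hY : InN b Y) :
    InN b (X * Y) := fun _ _ h => hX.mul_apply_eq_zero hY (by omega)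

theorem InN.blockProj_mul_eq_zero {X Y : Matrix (Fin n) (Fin n) F} (hX : InN b X)
    (hY : InN b Y) {i j : ℕ} (hji : j ≤ i + 1) : blockProj b i j (X * Y) = 0 := by
  ext r s
  simp only [blockProj, Matrix.of_apply, Matrix.zero_apply]
  split_ifs with h
  · exact hX.mul_apply_eq_zero hY (h.2 ▸ h.1 ▸ hji)
  · rfl

theorem InBlk.mul_eq_zero {t i : ℕ} (hub : ∀ r, b r ≤ t) {M Y : Matrix (Fin n) (Fin n) F}
    (hM : InBlk b i t M) (hY : InN b Y) : M * Y = 0 := by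
  ext r s
  rw [Matrix.mul_apply, Matrix.zero_apply]
  refine Finset.sum_eq_zero fun q _ => ?_
  by_cases h : b r = i ∧ b q = t
  · rw [hY q s (h.2 ▸ hub s), mul_zero]
  · rw [hM r q h, zero_mul]

theorem InN.mul_eq_blockProj_mul (hlb : ∀ r, 1 ≤ b r) {X M : Matrix (Fin n) (Fin n) F}
    (hX : InN b X) {j : ℕ} (hM : InBlk b 2 j M) : X * M = blockProj b 1 2 X * M := by
  ext r s
  simp only [Matrix.mul_apply]
  refine Finset.sum_congr rfl fun q _ => ?_
  simp only [blockProj, Matrix.of_apply]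
  split_ifs with h
  · rfl
  · by_cases hq : b q = 2
    · rw [hX r q (by have := hlb r; omega), zero_mul]
    · rw [hM q s fun h' => hq h'.1, mul_zero, mul_zero]

theorem blockProj_eq_sum_single {i : ℕ} {r₁ : Fin n} (hr₁ : b r₁ = i)
    (huniq : ∀ r, b r = i → r = r₁) (j : ℕ) (A : Matrix (Fin n) (Fin n) F) :
    blockProj b i j A =
      ∑ v ∈ Finset.univ.filter (b · = j), A r₁ v • Matrix.single r₁ v (1 : F) := by
  ext r s
  simp only [blockProj, Matrix.of_apply, Matrix.sum_apply, Matrix.smul_apply,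
    Matrix.single_apply, smul_eq_mul, mul_ite, mul_one, mul_zero]
  by_cases hr : r = r₁
  · subst hr
    simp [hr₁]
  · rw [if_neg fun h => hr (huniq r h.1),
      Finset.sum_eq_zero fun c _ => if_neg fun h => hr h.1.symm]

theorem map_eq_map_blockProj {t i₀ j₀ : ℕ} (hlb : ∀ r, 1 ≤ b r) (hub : ∀ r, b r ≤ t)
    (hi₀ : 1 ≤ i₀) (hij₀ : i₀ < j₀) (hj₀ : j₀ ≤ t)
    (f : Matrix (Fin n) (Fin n) F →ₗ[F] Matrix (Fin n) (Fin n) F)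
    (hzero : ∀ i j, 1 ≤ i → i < j → j ≤ t → ¬(i = i₀ ∧ j = j₀) →
      ∀ A, InBlk b i j A → f A = 0)
    {A : Matrix (Fin n) (Fin n) F} (hA : InN b A) : f A = f (blockProj b i₀ j₀ A) := by
  have hS : ∀ r, b r ∈ Finset.Icc 1 t := fun r => Finset.mem_Icc.2 ⟨hlb r, hub r⟩
  conv_lhs => rw [← sum_blockProj _ hS A]
  rw [map_sum, Finset.sum_eq_single_of_mem (i₀, j₀)
    (by simp only [Finset.mem_product, Finset.mem_Icc]; omega)]
  rintro ⟨i, j⟩ hS hne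
  simp only [Finset.mem_product, Finset.mem_Icc] at hS
  rcases lt_or_ge i j with hij | hji
  · exact hzero i j hS.1.1 hij hS.2.2 (fun h => hne (by rw [h.1, h.2])) _ (inBlk_blockProj i j A)
  · rw [hA.blockProj_eq_zero hji, map_zero]

theorem InN.mul_map_comm (hlb : ∀ r, 1 ≤ b r) {r₁ : Fin n} (hr₁ : b r₁ = 1)
    (huniq : ∀ r, b r = 1 → r = r₁) {j : ℕ}
    (f : Matrix (Fin n) (Fin n) F →ₗ[F] Matrix (Fin n) (Fin n) F)
    (hf : ∀ A, InN b A → f A = f (blockProj b 1 2 A))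
    (hfN : ∀ A, InN b A → InBlk b 2 j (f A))
    (hrow : ∀ u v, b u = 2 → b v = 2 →
      Matrix.single r₁ u (1 : F) * f (Matrix.single r₁ v 1)
        = Matrix.single r₁ v 1 * f (Matrix.single r₁ u 1))
    {X Y : Matrix (Fin n) (Fin n) F} (hX : InN b X) (hY : InN b Y) :
    X * f Y = Y * f X := by
  rw [hX.mul_eq_blockProj_mul hlb (hfN Y hY), hY.mul_eq_blockProj_mul hlb (hfN X hX),
    hf Y hY, hf X hX]
  simp only [blockProj_eq_sum_single hr₁ huniq]
  refine sum_smul_mul_map_sum_smul_comm _ _ f (fun u hu v hv => ?_) _ _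
  simp only [Finset.mem_filter] at hu hv
  exact hrow u v hu.2 hv.2

end BlockMatrices

theorem stmt9_general {F : Type*} [Field F] {n t : ℕ} (b : Fin n → ℕ)
    (ht : 3 ≤ t)
    (hlb : ∀ r, 1 ≤ b r) (hub : ∀ r, b r ≤ t)
    (r₁ : Fin n) (hr₁ : b r₁ = 1)
    (hcard : (Finset.univ.filter fun r => b r = 1).card = 1)
    (f : Matrix (Fin n) (Fin n) F →ₗ[F] Matrix (Fin n) (Fin n) F)
    (hzero : ∀ i j, 1 ≤ i → i < j → j ≤ t → ¬(i = 1 ∧ j = 2) →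
      ∀ A, InBlk b i j A → f A = 0)
    (h12 : ∀ A, InBlk b 1 2 A → InBlk b 2 t (f A))
    (hsym : ∀ u v, b u = 2 → b v = 2 → ∀ s, b s = t →
      f (Matrix.single r₁ u (1 : F)) v s
        = f (Matrix.single r₁ v (1 : F)) u s) :
    IsDerN b f := by
  have huniq : ∀ r, b r = 1 → r = r₁ := fun r hr =>
    Finset.card_le_one.mp hcard.le r (by simp [hr]) r₁ (by simp [hr₁])
  have hf : ∀ A, InN b A → f A = f (blockProj b 1 2 A) := fun A hA =>
    map_eq_map_blockProj hlb hub le_rfl one_lt_two (by omega) f hzero hA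
  have hfN : ∀ A, InN b A → InBlk b 2 t (f A) := fun A hA =>
    hf A hA ▸ h12 _ (inBlk_blockProj 1 2 A)
  have hfE : ∀ u, b u = 2 → InBlk b 2 t (f (Matrix.single r₁ u 1)) := fun u hu =>
    h12 _ (hr₁ ▸ hu ▸ inBlk_single r₁ u 1)
  have hrow : ∀ u v, b u = 2 → b v = 2 →
      Matrix.single r₁ u (1 : F) * f (Matrix.single r₁ v 1)
        = Matrix.single r₁ v 1 * f (Matrix.single r₁ u 1) := fun u v hu hv =>
    Matrix.single_mul_eq_single_mul _ _ fun s => by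
      by_cases hs : b s = t
      · exact hsym v u hv hu s hs
      · rw [hfE v hv u s fun h => hs h.2, hfE u hu v s fun h => hs h.2]
  have hfmul : ∀ X Y, InN b X → InN b Y → f (X * Y) = 0 := fun X Y hX hY => by
    rw [hf _ (hX.mul hY), hX.blockProj_mul_eq_zero hY le_rfl, map_zero]
  refine ⟨fun A hA => (hfN A hA).inN (by omega), fun X Y hX hY => ?_⟩
  rw [map_sub, hfmul X Y hX hY, hfmul Y X hY hX, (hfN X hX).mul_eq_zero hub hY,
    (hfN Y hY).mul_eq_zero hub hX, hX.mul_map_comm hlb hr₁ huniq f hf hfN hrow hY]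
  abel

/-- converse part of Lemma on `f(N^{12})_{2t}`: if block 1 is a single index
`r₁` and a linear map `f : N → N` vanishes on every `N^{ij}` with `(i,j) ≠ (1,2)`, maps
`N^{12}` into `N^{2t}`, and satisfies the row-symmetry condition
`f(E_u) v s = f(E_v) u s`, then `f` is a derivation of `N`. -/
theorem stmt9 {F : Type*} [Field F] {n t : ℕ} (b : Fin n → ℕ)
    (hn : 1 ≤ n) (ht : 3 ≤ t) (hmono : Monotone b)
    (hlb : ∀ r, 1 ≤ b r) (hub : ∀ r, b r ≤ t)
    (hsurj : ∀ k, 1 ≤ k → k ≤ t → ∃ r, b r = k)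
    (r₁ : Fin n) (hr₁ : b r₁ = 1)
    (hcard : (Finset.univ.filter fun r => b r = 1).card = 1)
    (f : Matrix (Fin n) (Fin n) F →ₗ[F] Matrix (Fin n) (Fin n) F)
    (hzero : ∀ i j, 1 ≤ i → i < j → j ≤ t → ¬(i = 1 ∧ j = 2) →
      ∀ A, InBlk b i j A → f A = 0)
    (h12 : ∀ A, InBlk b 1 2 A → InBlk b 2 t (f A))
    (hsym : ∀ u v, b u = 2 → b v = 2 → ∀ s, b s = t →
      f (Matrix.single r₁ u (1 : F)) v s
        = f (Matrix.single r₁ v (1 : F)) u s) :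
    IsDerN b f :=
  stmt9_general b ht hlb hub r₁ hr₁ hcard f hzero h12 hsym
end

section
/- Let f be a derivation of N. (i) If block t contains at least two indices (#{s : b s = t} ≥ 2), then for every A ∈ N^{t−1,t} and all indices r, s with b r = 1 and b s = t−1, the entry f(A) r s is zero. (ii) If block t consists of a single index s₁, then, writing F_w ∈ N^{t−1,t} for the matrix with entry 1 in position (w, s₁) and 0 elsewhere (for any w with b w = t−1), one has f(F_u) r v = f(F_v) r u for all indices u, v with b u = b v = t−1 and every index r with b r = 1. -/
/-! Let `A ∈ N^{ij}` with `i < j` and `E = E_{s s'}` with `b s = i`, `b s' = j`. Both `AE` and `EA`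
vanish, so the derivation rule applied to `[A, E] = 0`, read at the entry `(r, s')` with `b r ≠ i`,
gives `f(A) r s = (f(E) A) r s'`. This vanishes when column `s'` of `A` does; with a second index
in block `j`, `A` splits into two matrices of `N^{ij}` each with a zero column there, giving (i).
For `A = E_{u s'}` the right side is `f(E_{s s'}) r u`, which is (ii). -/

open Matrix

section

variable {F : Type*} [Field F] {n : ℕ} {b : Fin n → ℕ} {i j : ℕ}
  {A B : Matrix (Fin n) (Fin n) F}

theorem InBlk.inN_s10 (hA : InBlk b i j A) (hij : i < j) : InN b A :=
  fun r s hsr => hA r s fun ⟨hr, hs⟩ => by omega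

theorem InBlk.sub (hA : InBlk b i j A) (hB : InBlk b i j B) : InBlk b i j (A - B) :=
  fun r s h => by rw [Matrix.sub_apply, hA r s h, hB r s h, sub_zero]

theorem InBlk.updateCol_zero (hA : InBlk b i j A) (s : Fin n) :
    InBlk b i j (A.updateCol s 0) := fun r q h => by
  rw [updateCol_apply]
  split_ifs
  · rfl
  · exact hA r q h

theorem inBlk_single_s10 {u w : Fin n} (hu : b u = i) (hw : b w = j) (c : F) :
    InBlk b i j (single u w c) := fun _ _ h =>
  single_apply_of_ne _ _ _ _ _ fun ⟨hp, hq⟩ => h ⟨hp ▸ hu, hq ▸ hw⟩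

theorem InBlk.mul_apply_eq_zero_of_row_not_mem (hA : InBlk b i j A) {r : Fin n}
    (hr : b r ≠ i) (B : Matrix (Fin n) (Fin n) F) (q : Fin n) : (A * B) r q = 0 := by
  rw [mul_apply]
  exact Finset.sum_eq_zero fun k _ => by rw [hA r k fun h => hr h.1, zero_mul]

theorem InBlk.mul_eq_zero_s10 {k l : ℕ} (hA : InBlk b i j A) (hB : InBlk b k l B) (hjk : j ≠ k) :
    A * B = 0 := by
  ext p q
  rw [mul_apply, Matrix.zero_apply]
  refine Finset.sum_eq_zero fun m _ => ?_
  by_cases hm : b m = j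
  · rw [hB m q fun h => hjk (hm ▸ h.1), mul_zero]
  · rw [hA p m fun h => hm h.2, zero_mul]

end

namespace IsDerN

variable {F : Type*} [Field F] {n : ℕ} {b : Fin n → ℕ} {i j : ℕ}
  {f : Matrix (Fin n) (Fin n) F →ₗ[F] Matrix (Fin n) (Fin n) F}
  {A : Matrix (Fin n) (Fin n) F} {r s s' : Fin n}

theorem apply_eq_mul_apply (hf : IsDerN b f) (hij : i < j) (hA : InBlk b i j A)
    (hr : b r ≠ i) (hs : b s = i) (hs' : b s' = j) :
    f A r s = (f (single s s' 1) * A) r s' := by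
  have hE := inBlk_single_s10 hs hs' (1 : F)
  have hder := hf.2 A _ (hA.inN_s10 hij) (hE.inN_s10 hij)
  rw [hA.mul_eq_zero_s10 hE hij.ne', hE.mul_eq_zero_s10 hA hij.ne', sub_zero, map_zero] at hder
  have hentry := congrFun (congrFun hder r) s'
  rw [Matrix.add_apply, Matrix.sub_apply, Matrix.sub_apply, mul_single_apply_same, mul_one,
    hE.mul_apply_eq_zero_of_row_not_mem hr, hA.mul_apply_eq_zero_of_row_not_mem hr,
    Matrix.zero_apply] at hentry
  linear_combination -hentry

theorem apply_eq_zero_of_col_eq_zero (hf : IsDerN b f) (hij : i < j) (hA : InBlk b i j A)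
    (hr : b r ≠ i) (hs : b s = i) (hs' : b s' = j) (hcol : ∀ k, A k s' = 0) :
    f A r s = 0 := by
  rw [hf.apply_eq_mul_apply hij hA hr hs hs', mul_apply]
  exact Finset.sum_eq_zero fun k _ => by rw [hcol k, mul_zero]

theorem apply_eq_zero_of_block_nontrivial (hf : IsDerN b f) (hij : i < j) (hA : InBlk b i j A)
    (hr : b r ≠ i) (hs : b s = i) {s₁ s₂ : Fin n} (hs₁ : b s₁ = j) (hs₂ : b s₂ = j)
    (h₁₂ : s₁ ≠ s₂) : f A r s = 0 := by
  have hA₁ := hA.updateCol_zero s₁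
  have hA₂ := hA.sub hA₁
  have h₁ := hf.apply_eq_zero_of_col_eq_zero hij hA₁ hr hs hs₁ fun k => updateCol_self
  have h₂ := hf.apply_eq_zero_of_col_eq_zero hij hA₂ hr hs hs₂ fun k => by
    rw [Matrix.sub_apply, updateCol_ne h₁₂.symm, sub_self]
  rw [← sub_add_cancel A (A.updateCol s₁ 0), map_add, Matrix.add_apply, h₁, h₂, add_zero]

theorem apply_single_apply_comm (hf : IsDerN b f) (hij : i < j) {u v : Fin n}
    (hu : b u = i) (hv : b v = i) (hs' : b s' = j) (hr : b r ≠ i) :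
    f (single u s' 1) r v = f (single v s' 1) r u := by
  rw [hf.apply_eq_mul_apply hij (inBlk_single_s10 hu hs' 1) hr hv hs', mul_single_apply_same,
    mul_one]

end IsDerN

theorem stmt10_general {F : Type*} [Field F] {n t : ℕ} (b : Fin n → ℕ)
    (ht : 3 ≤ t)
    (f : Matrix (Fin n) (Fin n) F →ₗ[F] Matrix (Fin n) (Fin n) F)
    (hf : IsDerN b f) :
    (2 ≤ (Finset.univ.filter fun s => b s = t).card →
      ∀ A, InBlk b (t - 1) t A → ∀ r s, b r = 1 → b s = t - 1 → f A r s = 0) ∧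
    (∀ s₁ : Fin n, b s₁ = t → (Finset.univ.filter fun s => b s = t).card = 1 →
      ∀ u v, b u = t - 1 → b v = t - 1 → ∀ r, b r = 1 →
        f (Matrix.single u s₁ (1 : F)) r v
          = f (Matrix.single v s₁ (1 : F)) r u) := by
  have hlt : t - 1 < t := by omega
  have hr₁ : ∀ r, b r = 1 → b r ≠ t - 1 := fun r hr => by omega
  refine ⟨fun hcard A hA r s hr hs => ?_, fun s₁ hs₁ _ u v hu hv r hr => ?_⟩
  · obtain ⟨s₁, hs₁, s₂, hs₂, h₁₂⟩ := Finset.one_lt_card.mp hcard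
    rw [Finset.mem_filter] at hs₁ hs₂
    exact hf.apply_eq_zero_of_block_nontrivial hlt hA (hr₁ r hr) hs hs₁.2 hs₂.2 h₁₂
  · exact hf.apply_single_apply_comm hlt hu hv hs₁ (hr₁ r hr)

/-- for a derivation `f` of `N`: (i) if block `t` has at least two indices
then the `(1,t-1)` block of `f(N^{t-1,t})` vanishes; (ii) if block `t` is a single index
`s₁`, then `f(F_u) r v = f(F_v) r u` for `b u = b v = t-1`, `b r = 1`, where
`F_w` has entry 1 at `(w, s₁)` and 0 elsewhere. -/
theorem stmt10 {F : Type*} [Field F] {n t : ℕ} (b : Fin n → ℕ)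
    (hn : 1 ≤ n) (ht : 3 ≤ t) (hmono : Monotone b)
    (hlb : ∀ r, 1 ≤ b r) (hub : ∀ r, b r ≤ t)
    (hsurj : ∀ k, 1 ≤ k → k ≤ t → ∃ r, b r = k)
    (f : Matrix (Fin n) (Fin n) F →ₗ[F] Matrix (Fin n) (Fin n) F)
    (hf : IsDerN b f) :
    (2 ≤ (Finset.univ.filter fun s => b s = t).card →
      ∀ A, InBlk b (t - 1) t A → ∀ r s, b r = 1 → b s = t - 1 → f A r s = 0) ∧
    (∀ s₁ : Fin n, b s₁ = t → (Finset.univ.filter fun s => b s = t).card = 1 →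
      ∀ u v, b u = t - 1 → b v = t - 1 → ∀ r, b r = 1 →
        f (Matrix.single u s₁ (1 : F)) r v
          = f (Matrix.single v s₁ (1 : F)) r u) :=
  stmt10_general b ht f hf
end

section
/- Assume char F ≠ 2. Let f be a derivation of N and let i, j satisfy 1 ≤ i, i+1 < j ≤ t. Then for every A ∈ N^{ij} and all indices r, s, the entry f(A) r s is zero unless either (b r = i and b s ≥ j) or (b s = j and b r < i). (That is, f(N^{ij}) is contained in the sum of the blocks (p, j) with p ≤ i and the blocks (i, q) with q ≥ j.) -/
/-!
By linearity it suffices to treat `A = E_uw` with `u` in block `i` and `w` in block `j`. Writing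
`E_uw = [E_uv, E_vw]` for `v` in a block `m` with `i < m < j` and expanding `f(E_uw)` by the
Leibniz rule gives four terms, each an entry of `f(E_uv)` or `f(E_vw)` and so zero on and below
the block diagonal; for every entry `(r, s)` outside the two permitted strips some middle block
kills all four terms, except when `b r < i < b s < j` or `i < b r < j < b s`. In those two cases
take `v = s` (resp. `v = r`): the Leibniz rule for the commuting pair `E_sw, E_uw`
(resp. `E_ur, E_uw`) shows that the entry equals its own negative, hence vanishes as
`char F ≠ 2`.
-/

open Matrix

namespace Matrix

variable {ι R : Type*} [Fintype ι] [DecidableEq ι] [NonUnitalNonAssocSemiring R]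

theorem single_mul_apply (x y : ι) (c : R) (M : Matrix ι ι R) (r s : ι) :
    (single x y c * M) r s = if r = x then c * M y s else 0 := by
  split_ifs with h
  · subst h; simp
  · simp [h]

theorem mul_single_apply (x y : ι) (c : R) (M : Matrix ι ι R) (r s : ι) :
    (M * single x y c) r s = if s = y then M r x * c else 0 := by
  split_ifs with h
  · subst h; simp
  · simp [h]

end Matrix

theorem LinearMap.apply_apply_eq_zero_of_forall_single {ι R : Type*} [Fintype ι] [DecidableEq ι]
    [CommSemiring R] (f : Matrix ι ι R →ₗ[R] Matrix ι ι R) {A : Matrix ι ι R} {r s : ι}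
    (h : ∀ u w, A u w ≠ 0 → f (Matrix.single u w 1) r s = 0) : f A r s = 0 := by
  rw [matrix_eq_sum_single A, map_sum, Matrix.sum_apply]
  refine Finset.sum_eq_zero fun u _ => ?_
  rw [map_sum, Matrix.sum_apply]
  refine Finset.sum_eq_zero fun w _ => ?_
  by_cases hA : A u w = 0
  · simp [hA]
  · rw [← mul_one (A u w), ← smul_eq_mul, ← smul_single, map_smul, Matrix.smul_apply, h u w hA,
      smul_zero]

theorem eq_zero_of_eq_neg_of_ringChar_ne_two {F : Type*} [Field F] (hchar : ringChar F ≠ 2)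
    {a : F} (h : a = -a) : a = 0 :=
  (mul_eq_zero.mp (by linear_combination h : (2 : F) * a = 0)).resolve_left
    (Ring.two_ne_zero hchar)

section

variable {F : Type*} [Field F] {n : ℕ} {b : Fin n → ℕ}

theorem inN_single {u v : Fin n} (h : b u < b v) (c : F) : InN b (single u v c) := by
  intro r s hrs
  apply single_apply_of_ne
  rintro ⟨rfl, rfl⟩
  omega

namespace IsDerN

variable {f : Matrix (Fin n) (Fin n) F →ₗ[F] Matrix (Fin n) (Fin n) F} (hf : IsDerN b f)
include hf

theorem apply_single_apply_eq_zero_of_le {u v : Fin n} (h : b u < b v) {r s : Fin n}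
    (hsr : b s ≤ b r) : f (single u v 1) r s = 0 :=
  hf.1 _ (inN_single h 1) r s hsr

theorem apply_commutator_single_apply {x y u w : Fin n} (hxy : b x < b y) (huw : b u < b w)
    (r s : Fin n) :
    f (single x y 1 * single u w 1 - single u w 1 * single x y 1) r s =
      (if s = w then f (single x y 1) r u else 0) - (if r = u then f (single x y 1) w s else 0)
      + (if r = x then f (single u w 1) y s else 0)
      - (if s = y then f (single u w 1) r x else 0) := by
  rw [hf.2 _ _ (inN_single hxy 1) (inN_single huw 1)]
  simp only [Matrix.add_apply, Matrix.sub_apply, single_mul_apply, mul_single_apply, one_mul,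
    mul_one]
  ring

theorem apply_single_apply_of_lt_of_lt {u v w : Fin n} (huv : b u < b v) (hvw : b v < b w)
    (r s : Fin n) :
    f (single u w 1) r s =
      (if s = w then f (single u v 1) r v else 0) - (if r = v then f (single u v 1) w s else 0)
      + (if r = u then f (single v w 1) v s else 0)
      - (if s = v then f (single v w 1) r u else 0) := by
  have hwu : w ≠ u := fun h => by subst h; omega
  have hcomm : single u v (1 : F) * single v w 1 - single v w 1 * single u v 1 = single u w 1 := by
    rw [single_mul_single_same, single_mul_single_of_ne (h := hwu), mul_one, sub_zero]
  rw [← hf.apply_commutator_single_apply huv hvw, hcomm]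

theorem leibniz_terms_eq_zero_of_ne {x y u w : Fin n} (hxy : b x < b y)
    (huw : b u < b w) (hyu : y ≠ u) (hwx : w ≠ x) (r s : Fin n) :
    (if s = w then f (single x y 1) r u else 0) - (if r = u then f (single x y 1) w s else 0)
      + (if r = x then f (single u w 1) y s else 0)
      - (if s = y then f (single u w 1) r x else 0) = 0 := by
  have hcomm : single x y (1 : F) * single u w 1 - single u w 1 * single x y 1 = 0 := by
    rw [single_mul_single_of_ne (h := hyu), single_mul_single_of_ne (h := hwx), sub_zero]
  rw [← hf.apply_commutator_single_apply hxy huw, hcomm, map_zero, Matrix.zero_apply]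

theorem apply_single_apply_eq_zero_of_lt_of_lt {u v w : Fin n} (huv : b u < b v)
    (hvw : b v < b w) {r s : Fin n} (hsw : s = w → b v ≤ b r) (hrv : r = v → b s ≤ b w)
    (hru : r = u → b s ≤ b v) (hsv : s = v → b u ≤ b r) : f (single u w 1) r s = 0 := by
  rw [hf.apply_single_apply_of_lt_of_lt huv hvw]
  have h₁ : (if s = w then f (single u v 1) r v else 0) = 0 := by
    split_ifs with h
    exacts [hf.apply_single_apply_eq_zero_of_le huv (hsw h), rfl]
  have h₂ : (if r = v then f (single u v 1) w s else 0) = 0 := by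
    split_ifs with h
    exacts [hf.apply_single_apply_eq_zero_of_le huv (hrv h), rfl]
  have h₃ : (if r = u then f (single v w 1) v s else 0) = 0 := by
    split_ifs with h
    exacts [hf.apply_single_apply_eq_zero_of_le hvw (hru h), rfl]
  have h₄ : (if s = v then f (single v w 1) r u else 0) = 0 := by
    split_ifs with h
    exacts [hf.apply_single_apply_eq_zero_of_le hvw (hsv h), rfl]
  rw [h₁, h₂, h₃, h₄]
  ring

theorem apply_single_apply_eq_zero_of_col_between (hchar : ringChar F ≠ 2) {u w r s : Fin n}
    (hus : b u < b s) (hsw : b s < b w) (hru : r ≠ u) (hrs : r ≠ s) :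
    f (single u w 1) r s = 0 := by
  have hws : w ≠ s := fun h => by subst h; omega
  have hwu : w ≠ u := fun h => by subst h; omega
  have hfac := hf.apply_single_apply_of_lt_of_lt hus hsw r s
  have hcomm := hf.leibniz_terms_eq_zero_of_ne hsw (hus.trans hsw) hwu hws r w
  simp only [↓reduceIte, if_neg hws.symm, if_neg hru, if_neg hrs] at hfac hcomm
  exact eq_zero_of_eq_neg_of_ringChar_ne_two hchar (by linear_combination hfac - hcomm)

theorem apply_single_apply_eq_zero_of_row_between (hchar : ringChar F ≠ 2) {u w r s : Fin n}
    (hur : b u < b r) (hrw : b r < b w) (hsw : s ≠ w) (hsr : s ≠ r) :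
    f (single u w 1) r s = 0 := by
  have hru : r ≠ u := fun h => by subst h; omega
  have hwu : w ≠ u := fun h => by subst h; omega
  have hfac := hf.apply_single_apply_of_lt_of_lt hur hrw r s
  have hcomm := hf.leibniz_terms_eq_zero_of_ne hur (hur.trans hrw) hru hwu u s
  simp only [↓reduceIte, if_neg hsw, if_neg hru, if_neg hsr] at hfac hcomm
  exact eq_zero_of_eq_neg_of_ringChar_ne_two hchar (by linear_combination hfac + hcomm)

theorem apply_single_apply_eq_zero_off_hook (hchar : ringChar F ≠ 2) {u w : Fin n}
    (hsurj : ∀ m, b u < m → m < b w → ∃ v, b v = m) (huw : b u + 1 < b w) {r s : Fin n}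
    (hrow : ¬(b r = b u ∧ b w ≤ b s)) (hcol : ¬(b s = b w ∧ b r < b u)) :
    f (single u w 1) r s = 0 := by
  by_cases hsr : b s ≤ b r
  · exact hf.apply_single_apply_eq_zero_of_le (by omega) hsr
  by_cases hs : b r < b u ∧ b u < b s ∧ b s < b w
  · exact hf.apply_single_apply_eq_zero_of_col_between hchar hs.2.1 hs.2.2
      (ne_of_apply_ne b (by omega)) (ne_of_apply_ne b (by omega))
  by_cases hr : b u < b r ∧ b r < b w ∧ b w < b s
  · exact hf.apply_single_apply_eq_zero_of_row_between hchar hr.1 hr.2.1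
      (ne_of_apply_ne b (by omega)) (ne_of_apply_ne b (by omega))
  obtain ⟨m, hum, hmw, hm⟩ : ∃ m, b u < m ∧ m < b w ∧ (b s = b w → m ≤ b r) ∧
      (b r = m → b s ≤ b w) ∧ (b r = b u → b s ≤ m) ∧ (b s = m → b u ≤ b r) := by
    by_cases hr' : b u < b r ∧ b r < b w
    · exact ⟨b r, hr'.1, hr'.2, by omega⟩
    by_cases hs' : b u < b s ∧ b s < b w
    · exact ⟨b s, hs'.1, hs'.2, by omega⟩
    exact ⟨b u + 1, by omega, huw, by omega⟩
  obtain ⟨v, rfl⟩ := hsurj m hum hmw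
  exact hf.apply_single_apply_eq_zero_of_lt_of_lt hum hmw (hm.1 ∘ congrArg b)
    (hm.2.1 ∘ congrArg b) (hm.2.2.1 ∘ congrArg b) (hm.2.2.2 ∘ congrArg b)

end IsDerN

end

theorem stmt11_general {F : Type*} [Field F] {n t : ℕ} (b : Fin n → ℕ)
    (hsurj : ∀ k, 1 ≤ k → k ≤ t → ∃ r, b r = k)
    (hchar : ringChar F ≠ 2)
    (f : Matrix (Fin n) (Fin n) F →ₗ[F] Matrix (Fin n) (Fin n) F)
    (hf : IsDerN b f)
    (i j : ℕ) (hij : i + 1 < j) (hj : j ≤ t) :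
    ∀ A, InBlk b i j A → ∀ r s,
      ¬(b r = i ∧ j ≤ b s) → ¬(b s = j ∧ b r < i) →
      f A r s = 0 := by
  intro A hA r s hrow hcol
  refine f.apply_apply_eq_zero_of_forall_single fun u w huw => ?_
  obtain ⟨rfl, rfl⟩ : b u = i ∧ b w = j := by_contra fun h => huw (hA u w h)
  exact hf.apply_single_apply_eq_zero_off_hook hchar
    (fun m _ hm => hsurj m (by omega) (by omega)) hij hrow hcol

/-- when `char F ≠ 2`, for a derivation `f` of `N` and `1 ≤ i`, `i+1 < j ≤ t`,
the image `f(N^{ij})` lies in the blocks `(p,j)` with `p ≤ i` and `(i,q)` with `q ≥ j`. -/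
theorem stmt11 {F : Type*} [Field F] {n t : ℕ} (b : Fin n → ℕ)
    (hn : 1 ≤ n) (ht : 3 ≤ t) (hmono : Monotone b)
    (hlb : ∀ r, 1 ≤ b r) (hub : ∀ r, b r ≤ t)
    (hsurj : ∀ k, 1 ≤ k → k ≤ t → ∃ r, b r = k)
    (hchar : ringChar F ≠ 2)
    (f : Matrix (Fin n) (Fin n) F →ₗ[F] Matrix (Fin n) (Fin n) F)
    (hf : IsDerN b f)
    (i j : ℕ) (hi : 1 ≤ i) (hij : i + 1 < j) (hj : j ≤ t) :
    ∀ A, InBlk b i j A → ∀ r s,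
      ¬(b r = i ∧ j ≤ b s) → ¬(b s = j ∧ b r < i) →
      f A r s = 0 :=
  stmt11_general b hsurj hchar f hf i j hij hj
end
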